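/- arXiv:2505.00937 — 10 statements merged into one kernel-verified Lean document; each statement's English description precedes it below -/
import Mathlib

section
/- Let G be a probability measure on ℝ and for σ>0 let G_σ denote the pushforward of G under x ↦ σx. Let d assign a real number to every ordered pair of probability measures on ℝ, and let h : (0,∞) → (0,∞). Assume d is symmetric, i.e. d(F,F') = d(F',F) for all F,F', and rescalable with scaling function h, i.e. d(map(τ)F, map(τ)F') = h(τ)·d(F,F') for all τ>0 and all F,F', where map(τ)F is the pushforward of F under x ↦ τx. Fix σ>1 and suppose d(G_{1/σ}, G) > 0. Then: (1) if h is strictly increasing, d(G_σ, G) > d(G_{1/σ}, G); (2) if h is strictly decreasing, d(G_σ, G) < d(G_{1/σ}, G); (3) if h is constant, d(G_σ, G) = d(G_{1/σ}, G), the last equality holding even without the positivity assumption. In each case this follows from the identity d(G_σ, G) = h(σ)·d(G_{1/σ}, G). -/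
open MeasureTheory Set

/-! Rescaling the pair `(G_{1/σ}, G)` by `σ` gives `(G, G_σ)`, so rescalability and symmetry
give `d(G_σ, G) = h(σ) · d(G_{1/σ}, G)`. Rescaling by `1` shows `h 1 = 1` as soon as `d` takes a
nonzero value, and the three cases compare `h σ` with `h 1`. -/

lemma isProbabilityMeasure_map_const_mul (τ : ℝ) (F : Measure ℝ) [IsProbabilityMeasure F] :
    IsProbabilityMeasure (F.map (fun x => τ * x)) :=
  Measure.isProbabilityMeasure_map (measurable_const_mul τ).aemeasurable

lemma map_const_mul_map_inv_mul {σ : ℝ} (hσ : σ ≠ 0) (G : Measure ℝ) :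
    (G.map (fun x => σ⁻¹ * x)).map (fun x => σ * x) = G := by
  rw [Measure.map_map (measurable_const_mul σ) (measurable_const_mul σ⁻¹)]
  convert Measure.map_id
  ext x
  simp [← mul_assoc, mul_inv_cancel₀ hσ]

section RescalableDivergence

variable {d : Measure ℝ → Measure ℝ → ℝ} {h : ℝ → ℝ}
  (hrescale : ∀ τ > (0 : ℝ), ∀ F F' : Measure ℝ,
    IsProbabilityMeasure F → IsProbabilityMeasure F' →
    d (F.map (fun x => τ * x)) (F'.map (fun x => τ * x)) = h τ * d F F')
include hrescale

lemma scaling_one_eq_one {F F' : Measure ℝ} [IsProbabilityMeasure F] [IsProbabilityMeasure F']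
    (hd : d F F' ≠ 0) : h 1 = 1 := by
  have h_one := hrescale 1 one_pos F F' inferInstance inferInstance
  simp only [one_mul, Measure.map_id'] at h_one
  exact (mul_eq_right₀ hd).mp h_one.symm

lemma divergence_map_const_mul_eq_mul_map_inv_mul
    (hsymm : ∀ F F' : Measure ℝ, IsProbabilityMeasure F → IsProbabilityMeasure F' →
      d F F' = d F' F)
    (G : Measure ℝ) [IsProbabilityMeasure G] {σ : ℝ} (hσ : 0 < σ) :
    d (G.map (fun x => σ * x)) G = h σ * d (G.map (fun x => σ⁻¹ * x)) G := by
  have h_rescaled := hrescale σ hσ (G.map (fun x => σ⁻¹ * x)) G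
    (isProbabilityMeasure_map_const_mul _ G) inferInstance
  rw [map_const_mul_map_inv_mul hσ.ne'] at h_rescaled
  rw [hsymm _ G (isProbabilityMeasure_map_const_mul σ G) inferInstance, h_rescaled]

end RescalableDivergence

theorem stmt0_general
    (G : Measure ℝ) [IsProbabilityMeasure G]
    (d : Measure ℝ → Measure ℝ → ℝ)
    (h : ℝ → ℝ)
    (hsymm : ∀ F F' : Measure ℝ, IsProbabilityMeasure F → IsProbabilityMeasure F' →
      d F F' = d F' F)
    (hrescale : ∀ τ > (0 : ℝ), ∀ F F' : Measure ℝ,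
      IsProbabilityMeasure F → IsProbabilityMeasure F' →
      d (F.map (fun x => τ * x)) (F'.map (fun x => τ * x)) = h τ * d F F')
    (σ : ℝ) (hσ : 1 < σ) :
    (d (G.map (fun x => σ * x)) G = h σ * d (G.map (fun x => σ⁻¹ * x)) G) ∧
    (0 < d (G.map (fun x => σ⁻¹ * x)) G → StrictMonoOn h (Ioi 0) →
      d (G.map (fun x => σ⁻¹ * x)) G < d (G.map (fun x => σ * x)) G) ∧
    (0 < d (G.map (fun x => σ⁻¹ * x)) G → StrictAntiOn h (Ioi 0) →
      d (G.map (fun x => σ * x)) G < d (G.map (fun x => σ⁻¹ * x)) G) ∧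
    ((∀ τ₁ > (0 : ℝ), ∀ τ₂ > (0 : ℝ), h τ₁ = h τ₂) →
      d (G.map (fun x => σ * x)) G = d (G.map (fun x => σ⁻¹ * x)) G) := by
  have hσ₀ : 0 < σ := one_pos.trans hσ
  have : IsProbabilityMeasure (G.map (fun x => σ⁻¹ * x)) :=
    isProbabilityMeasure_map_const_mul _ G
  have key := divergence_map_const_mul_eq_mul_map_inv_mul hrescale hsymm G hσ₀
  refine ⟨key, fun hd hmono => ?_, fun hd hanti => ?_, fun hconst => ?_⟩
  · have h_one := scaling_one_eq_one hrescale hd.ne'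
    have : 1 < h σ := h_one ▸ hmono (mem_Ioi.mpr one_pos) (mem_Ioi.mpr hσ₀) hσ
    rw [key]
    exact lt_mul_left hd this
  · have h_one := scaling_one_eq_one hrescale hd.ne'
    have : h σ < 1 := h_one ▸ hanti (mem_Ioi.mpr one_pos) (mem_Ioi.mpr hσ₀) hσ
    rw [key]
    exact mul_lt_of_lt_one_left hd this
  · rcases eq_or_ne (d (G.map (fun x => σ⁻¹ * x)) G) 0 with hd | hd
    · rw [key, hd, mul_zero]
    · rw [key, hconst σ hσ₀ 1 one_pos, scaling_one_eq_one hrescale hd, one_mul]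

/-- Scale-family asymmetry for symmetric rescalable divergences
(Lemma "scale-asymmetry" of the paper). -/
theorem stmt0
    (G : Measure ℝ) [IsProbabilityMeasure G]
    (d : Measure ℝ → Measure ℝ → ℝ)
    (h : ℝ → ℝ)
    (hpos : ∀ τ > (0 : ℝ), 0 < h τ)
    (hsymm : ∀ F F' : Measure ℝ, IsProbabilityMeasure F → IsProbabilityMeasure F' →
      d F F' = d F' F)
    (hrescale : ∀ τ > (0 : ℝ), ∀ F F' : Measure ℝ,
      IsProbabilityMeasure F → IsProbabilityMeasure F' →
      d (F.map (fun x => τ * x)) (F'.map (fun x => τ * x)) = h τ * d F F')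
    (σ : ℝ) (hσ : 1 < σ) :
    (d (G.map (fun x => σ * x)) G = h σ * d (G.map (fun x => σ⁻¹ * x)) G) ∧
    (0 < d (G.map (fun x => σ⁻¹ * x)) G → StrictMonoOn h (Ioi 0) →
      d (G.map (fun x => σ⁻¹ * x)) G < d (G.map (fun x => σ * x)) G) ∧
    (0 < d (G.map (fun x => σ⁻¹ * x)) G → StrictAntiOn h (Ioi 0) →
      d (G.map (fun x => σ * x)) G < d (G.map (fun x => σ⁻¹ * x)) G) ∧
    ((∀ τ₁ > (0 : ℝ), ∀ τ₂ > (0 : ℝ), h τ₁ = h τ₂) →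
      d (G.map (fun x => σ * x)) G = d (G.map (fun x => σ⁻¹ * x)) G) :=
  stmt0_general G d h hsymm hrescale σ hσ
end

section
/- Let P be a probability measure on ℝ with finite first moment (∫|x| dP < ∞) that is not a Dirac point mass, and let G be its cumulative distribution function. For σ>0 the scale family member G_σ (pushforward of P under x ↦ σx) has CDF y ↦ G(y/σ). Then for every σ>1 both integrals below are finite and satisfy ∫_ℝ (G(y/σ) − G(y))² dy = σ · ∫_ℝ (G(σy) − G(y))² dy > ∫_ℝ (G(σy) − G(y))² dy. Equivalently, under continuous ranked probability (CRP) loss, the overdispersed forecast G_σ incurs strictly larger expected loss against the target G than the underdispersed forecast G_{1/σ}. -/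
/-!
As `cdf P` takes values in `[0, 1]`, `(G (σ y) - G y)² ≤ |G (σ y) - G y| = P (Ι y (σ y))`, and by
Tonelli `∫ P (Ι y (σ y)) dy = (1 - σ⁻¹) ∫ |x| dP`, because `x ∈ Ι y (σ y)` exactly for `y` in an
interval of length `(1 - σ⁻¹) |x|`. This gives integrability, and also positivity: if the
integral of the square vanished, so would `∫ |x| dP`, forcing `P = δ₀`. The identity with the
factor `σ` is the substitution `y ↦ y / σ`.
-/

open MeasureTheory Set ProbabilityTheory
open scoped Interval

lemma eq_dirac_of_ae_eq {α : Type*} [MeasurableSpace α] (μ : Measure α) [IsProbabilityMeasure μ]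
    {a : α} (h : ∀ᵐ x ∂μ, x = a) : μ = Measure.dirac a := by
  calc μ = μ.map id := Measure.map_id.symm
    _ = μ.map (fun _ => a) := Measure.map_congr h
    _ = Measure.dirac a := by rw [Measure.map_const, measure_univ, one_smul]

lemma setOf_mem_uIoc_mul_self {c : ℝ} (hc : 1 ≤ c) (x : ℝ) :
    {y : ℝ | x ∈ Ι y (c * y)} = Ico (min x (x / c)) (max x (x / c)) := by
  have hc0 : 0 < c := by linarith
  ext y
  simp only [mem_ofPred_eq, mem_uIoc, mem_Ico, min_le_iff, lt_max_iff, div_le_iff₀ hc0,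
    lt_div_iff₀ hc0]
  constructor
  · rintro (⟨h1, h2⟩ | ⟨h1, h2⟩)
    · exact ⟨Or.inr (by linarith [mul_comm c y]), Or.inl h1⟩
    · exact ⟨Or.inl h2, Or.inr (by linarith [mul_comm c y])⟩
  · rintro ⟨h1 | h1, h2 | h2⟩
    all_goals first
      | exact Or.inl ⟨by nlinarith, by nlinarith⟩
      | exact Or.inr ⟨by nlinarith, by nlinarith⟩

lemma volume_setOf_mem_uIoc_mul_self {c : ℝ} (hc : 1 ≤ c) (x : ℝ) :
    volume {y : ℝ | x ∈ Ι y (c * y)} = ENNReal.ofReal ((1 - c⁻¹) * |x|) := by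
  have hc' : 0 ≤ 1 - c⁻¹ := sub_nonneg.2 (inv_le_one_of_one_le₀ hc)
  rw [setOf_mem_uIoc_mul_self hc, Real.volume_Ico, max_sub_min_eq_abs, abs_sub_comm,
    show x - x / c = x * (1 - c⁻¹) by ring, abs_mul, abs_of_nonneg hc', mul_comm]

lemma measurableSet_setOf_snd_mem_uIoc (c : ℝ) :
    MeasurableSet {p : ℝ × ℝ | p.2 ∈ Ι p.1 (c * p.1)} :=
  (measurableSet_lt (by fun_prop) measurable_snd).inter
    (measurableSet_le measurable_snd (by fun_prop))

lemma lintegral_measure_uIoc_mul_self (μ : Measure ℝ) [SFinite μ] {c : ℝ} (hc : 1 ≤ c) :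
    ∫⁻ y, μ (Ι y (c * y)) = ENNReal.ofReal (1 - c⁻¹) * ∫⁻ x, ENNReal.ofReal |x| ∂μ := by
  have hc' : 0 ≤ 1 - c⁻¹ := sub_nonneg.2 (inv_le_one_of_one_le₀ hc)
  set s := {p : ℝ × ℝ | p.2 ∈ Ι p.1 (c * p.1)}
  calc ∫⁻ y, μ (Ι y (c * y))
      = ∫⁻ y, ∫⁻ x, s.indicator 1 (y, x) ∂μ :=
        lintegral_congr fun y => (lintegral_indicator_one measurableSet_uIoc).symm
    _ = ∫⁻ x, (∫⁻ y, s.indicator 1 (y, x)) ∂μ :=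
        lintegral_lintegral_swap ((measurable_const.indicator
          (measurableSet_setOf_snd_mem_uIoc c)).aemeasurable)
    _ = ∫⁻ x, ENNReal.ofReal ((1 - c⁻¹) * |x|) ∂μ := by
        refine lintegral_congr fun x => ?_
        rw [← volume_setOf_mem_uIoc_mul_self hc x]
        exact lintegral_indicator_one
          (measurable_prodMk_right (measurableSet_setOf_snd_mem_uIoc c))
    _ = ENNReal.ofReal (1 - c⁻¹) * ∫⁻ x, ENNReal.ofReal |x| ∂μ := by
        simp_rw [ENNReal.ofReal_mul hc']
        exact lintegral_const_mul _ measurable_abs.ennreal_ofReal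

lemma ofReal_abs_cdf_sub_cdf (μ : Measure ℝ) [IsProbabilityMeasure μ] (a b : ℝ) :
    ENNReal.ofReal |cdf μ b - cdf μ a| = μ (Ι a b) := by
  rcases le_total a b with hab | hab
  · rw [uIoc_of_le hab, abs_of_nonneg (sub_nonneg.2 (monotone_cdf μ hab)), ← (cdf μ).measure_Ioc,
      measure_cdf]
  · rw [uIoc_of_ge hab, abs_sub_comm, abs_of_nonneg (sub_nonneg.2 (monotone_cdf μ hab)),
      ← (cdf μ).measure_Ioc, measure_cdf]

lemma abs_cdf_sub_cdf_le_one (μ : Measure ℝ) (a b : ℝ) : |cdf μ b - cdf μ a| ≤ 1 :=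
  abs_sub_le_iff.2 ⟨by linarith [cdf_le_one μ b, cdf_nonneg μ a],
    by linarith [cdf_le_one μ a, cdf_nonneg μ b]⟩

lemma lintegral_ofReal_abs_cdf_comp_mul_sub (μ : Measure ℝ) [IsProbabilityMeasure μ] {c : ℝ}
    (hc : 1 ≤ c) :
    ∫⁻ y, ENNReal.ofReal |cdf μ (c * y) - cdf μ y| =
      ENNReal.ofReal (1 - c⁻¹) * ∫⁻ x, ENNReal.ofReal |x| ∂μ := by
  simp_rw [ofReal_abs_cdf_sub_cdf]
  exact lintegral_measure_uIoc_mul_self μ hc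

lemma integrable_cdf_comp_mul_sub (μ : Measure ℝ) [IsProbabilityMeasure μ]
    (hμ : Integrable (fun x => |x|) μ) {c : ℝ} (hc : 1 ≤ c) :
    Integrable (fun y => cdf μ (c * y) - cdf μ y) := by
  have hmeas : Measurable (cdf μ) := (monotone_cdf μ).measurable
  refine ⟨by fun_prop, (hasFiniteIntegral_iff_norm _).2 ?_⟩
  simp_rw [Real.norm_eq_abs, lintegral_ofReal_abs_cdf_comp_mul_sub μ hc]
  refine ENNReal.mul_lt_top ENNReal.ofReal_lt_top ?_
  simpa using (hasFiniteIntegral_iff_norm _).1 hμ.2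

lemma integrable_sq_cdf_comp_mul_sub (μ : Measure ℝ) [IsProbabilityMeasure μ]
    (hμ : Integrable (fun x => |x|) μ) {c : ℝ} (hc : 1 ≤ c) :
    Integrable (fun y => (cdf μ (c * y) - cdf μ y) ^ 2) := by
  have hmeas : Measurable (cdf μ) := (monotone_cdf μ).measurable
  refine (integrable_cdf_comp_mul_sub μ hμ hc).mono (by fun_prop) (ae_of_all _ fun y => ?_)
  simp only [Real.norm_eq_abs, abs_pow]
  nlinarith [abs_cdf_sub_cdf_le_one μ y (c * y), abs_nonneg (cdf μ (c * y) - cdf μ y)]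

lemma integral_sq_cdf_comp_mul_sub_pos (μ : Measure ℝ) [IsProbabilityMeasure μ]
    (hμ : Integrable (fun x => |x|) μ) (hμ0 : μ ≠ Measure.dirac 0) {c : ℝ} (hc : 1 < c) :
    0 < ∫ y, (cdf μ (c * y) - cdf μ y) ^ 2 := by
  refine (integral_nonneg fun y => sq_nonneg _).lt_of_ne' fun h0 => hμ0 (eq_dirac_of_ae_eq μ ?_)
  have hsq := (integral_eq_zero_iff_of_nonneg (fun _ => sq_nonneg _)
    (integrable_sq_cdf_comp_mul_sub μ hμ hc.le)).1 h0
  have hL1 : ∫⁻ y, ENNReal.ofReal |cdf μ (c * y) - cdf μ y| = 0 := by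
    refine (lintegral_congr_ae ?_).trans lintegral_zero
    filter_upwards [hsq] with y hy
    simpa using hy
  rw [lintegral_ofReal_abs_cdf_comp_mul_sub μ hc.le, mul_eq_zero, ENNReal.ofReal_eq_zero,
    lintegral_eq_zero_iff measurable_abs.ennreal_ofReal] at hL1
  rcases hL1 with hc' | habs
  · linarith [inv_lt_one_of_one_lt₀ hc]
  · filter_upwards [habs] with x hx
    simpa using hx

/-- In a scale family, CRP loss (the Cramér divergence) penalizes overdispersion
strictly more than underdispersion: for a non-degenerate target with finite first
moment and CDF `G`, and `σ > 1`,
`∫ (G(y/σ) − G(y))² dy = σ · ∫ (G(σy) − G(y))² dy > ∫ (G(σy) − G(y))² dy`. -/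
theorem stmt2
    (P : Measure ℝ) [IsProbabilityMeasure P]
    (hmom : Integrable (fun x => |x|) P)
    (hnd : ∀ x : ℝ, P ≠ Measure.dirac x)
    (G : ℝ → ℝ) (hG : ∀ y, G y = (P (Iic y)).toReal)
    (σ : ℝ) (hσ : 1 < σ) :
    Integrable (fun y => (G (y / σ) - G y) ^ 2) volume ∧
    Integrable (fun y => (G (σ * y) - G y) ^ 2) volume ∧
    (∫ y, (G (y / σ) - G y) ^ 2) = σ * ∫ y, (G (σ * y) - G y) ^ 2 ∧
    (∫ y, (G (σ * y) - G y) ^ 2) < ∫ y, (G (y / σ) - G y) ^ 2 := by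
  have hσ0 : 0 < σ := one_pos.trans hσ
  obtain rfl : G = cdf P := funext fun y => (hG y).trans (cdf_eq_real P y).symm
  set D := fun y => (cdf P (σ * y) - cdf P y) ^ 2 with hD
  have hscale : (fun y => (cdf P (y / σ) - cdf P y) ^ 2) = fun y => D (y / σ) := by
    funext y
    simp only [hD, mul_div_cancel₀ y hσ0.ne']
    ring
  have hint : Integrable D := integrable_sq_cdf_comp_mul_sub P hmom hσ.le
  have heq : ∫ y, D (y / σ) = σ * ∫ y, D y := by
    rw [Measure.integral_comp_div, abs_of_pos hσ0, smul_eq_mul]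
  rw [hscale]
  refine ⟨hint.comp_div hσ0.ne', hint, heq, ?_⟩
  rw [heq]
  exact lt_mul_left (integral_sq_cdf_comp_mul_sub_pos P hmom (hnd 0) hσ) hσ
end

section
/- Let f : ℝ → [0,∞) be a square-integrable probability density (with respect to Lebesgue measure), and for σ>0 let f_σ(x) = σ⁻¹ f(x/σ) denote the density of the scale family member G_σ. Fix σ>1 and assume ∫_ℝ (f_{1/σ}(x) − f(x))² dx > 0. Then ∫_ℝ (f_σ(x) − f(x))² dx = σ⁻¹ ∫_ℝ (f_{1/σ}(x) − f(x))² dx < ∫_ℝ (f_{1/σ}(x) − f(x))² dx. Equivalently, under quadratic loss, the overdispersed forecast with density f_σ incurs strictly smaller expected loss against the target density f than the underdispersed forecast with density f_{1/σ}. -/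
open MeasureTheory

/- The substitution `x = σ y` turns `∫ (σ⁻¹ f(x/σ) − f x)²` into
`σ ∫ (σ⁻¹ f y − f (σ y))² = σ⁻¹ ∫ (σ f (σ y) − f y)²`, and `σ⁻¹ < 1` for `σ > 1`. -/

theorem integral_sq_inv_mul_comp_div_sub (f : ℝ → ℝ) {σ : ℝ} (hσ : σ ≠ 0) :
    ∫ x, (σ⁻¹ * f (x / σ) - f x) ^ 2 = |σ|⁻¹ * ∫ x, (σ * f (σ * x) - f x) ^ 2 := by
  have hsubst := Measure.integral_comp_mul_left (fun x => (σ⁻¹ * f (x / σ) - f x) ^ 2) σ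
  have hpointwise : ∀ x, (σ⁻¹ * f (σ * x / σ) - f (σ * x)) ^ 2
      = (σ ^ 2)⁻¹ * (σ * f (σ * x) - f x) ^ 2 := fun x => by
    rw [mul_div_cancel_left₀ _ hσ]
    field_simp
    ring
  simp only [hpointwise, integral_const_mul, smul_eq_mul, abs_inv] at hsubst
  have habs : |σ| ≠ 0 := abs_ne_zero.mpr hσ
  calc ∫ x, (σ⁻¹ * f (x / σ) - f x) ^ 2
      = |σ| * ((σ ^ 2)⁻¹ * ∫ x, (σ * f (σ * x) - f x) ^ 2) := by
        rw [hsubst, mul_inv_cancel_left₀ habs]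
    _ = |σ|⁻¹ * ∫ x, (σ * f (σ * x) - f x) ^ 2 := by
        rw [← sq_abs σ, ← mul_assoc, sq, mul_inv, mul_inv_cancel_left₀ habs]

theorem stmt3_general
    (f : ℝ → ℝ)
    (σ : ℝ) (hσ : 1 < σ)
    (hpos : 0 < ∫ x, (σ * f (σ * x) - f x) ^ 2) :
    (∫ x, (σ⁻¹ * f (x / σ) - f x) ^ 2) = σ⁻¹ * ∫ x, (σ * f (σ * x) - f x) ^ 2 ∧
    (∫ x, (σ⁻¹ * f (x / σ) - f x) ^ 2) < ∫ x, (σ * f (σ * x) - f x) ^ 2 := by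
  have hσ0 : 0 < σ := one_pos.trans hσ
  have hscale := integral_sq_inv_mul_comp_div_sub f hσ0.ne'
  rw [abs_of_pos hσ0] at hscale
  exact ⟨hscale, hscale ▸ mul_lt_of_lt_one_left hpos (inv_lt_one_of_one_lt₀ hσ)⟩

/-- In a scale family of densities, quadratic loss (squared L² distance between
densities) penalizes underdispersion strictly more than overdispersion: with
`f_σ(x) = σ⁻¹ f(x/σ)` and `σ > 1`,
`∫ (f_σ − f)² = σ⁻¹ ∫ (f_{1/σ} − f)² < ∫ (f_{1/σ} − f)²`. -/
theorem stmt3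
    (f : ℝ → ℝ) (hf0 : ∀ x, 0 ≤ f x) (hf1 : ∫ x, f x = 1)
    (hf2 : Integrable (fun x => (f x) ^ 2))
    (σ : ℝ) (hσ : 1 < σ)
    (hpos : 0 < ∫ x, (σ * f (σ * x) - f x) ^ 2) :
    (∫ x, (σ⁻¹ * f (x / σ) - f x) ^ 2) = σ⁻¹ * ∫ x, (σ * f (σ * x) - f x) ^ 2 ∧
    (∫ x, (σ⁻¹ * f (x / σ) - f x) ^ 2) < ∫ x, (σ * f (σ * x) - f x) ^ 2 :=
  stmt3_general f σ hσ hpos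
end

section
/- Let f : ℝ → [0,∞) be a square-integrable probability density with ∫_ℝ f² > 0, and for σ>0 let f_σ(x) = σ⁻¹ f(x/σ). Then for every σ>0, (∫_ℝ f_σ(x) f(x) dx) · (∫_ℝ f_σ(x)² dx)^{−1/2} = (∫_ℝ f_{1/σ}(x) f(x) dx) · (∫_ℝ f_{1/σ}(x)² dx)^{−1/2}. Equivalently, the expected spherical loss ℓ(F,G) = −(∫ f_F g)(∫ f_F²)^{−1/2} over the scale family satisfies ℓ(G_σ, G) = ℓ(G_{1/σ}, G) for all σ>0: spherical loss penalizes overestimating and underestimating the scale symmetrically. -/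
open MeasureTheory

/-!
Substituting `x = σ y` turns `∫ f_σ · f` into `∫ f(y) f(σ y) dy` and `∫ f_σ²` into
`σ⁻¹ ∫ f²`; since `f_{1/σ}(x) = σ f(σ x)`, the cross term of `f_{1/σ}` is `σ` times that
of `f_σ`. Both sides therefore equal `σ^{1/2} (∫ f(y) f(σ y) dy) (∫ f²)^{-1/2}`.
-/

noncomputable def scaleDensity (f : ℝ → ℝ) (σ : ℝ) (x : ℝ) : ℝ := σ⁻¹ * f (x / σ)

theorem scaleDensity_inv_apply (f : ℝ → ℝ) (σ x : ℝ) :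
    scaleDensity f σ⁻¹ x = σ * f (σ * x) := by
  rw [scaleDensity, inv_inv, div_inv_eq_mul, mul_comm x]

theorem integral_scaleDensity_mul (f g : ℝ → ℝ) {σ : ℝ} (hσ : 0 < σ) :
    ∫ x, scaleDensity f σ x * g x = ∫ y, f y * g (σ * y) := by
  have hcomp : ∫ x, (fun y => f y * g (σ * y)) (x / σ) = σ * ∫ y, f y * g (σ * y) := by
    rw [Measure.integral_comp_div (fun y => f y * g (σ * y)), abs_of_pos hσ, smul_eq_mul]
  calc ∫ x, scaleDensity f σ x * g x
      = ∫ x, σ⁻¹ * (fun y => f y * g (σ * y)) (x / σ) := by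
        congr 1; funext x
        beta_reduce
        rw [scaleDensity, mul_div_cancel₀ x hσ.ne', mul_assoc]
    _ = ∫ y, f y * g (σ * y) := by
        rw [integral_const_mul, hcomp, inv_mul_cancel_left₀ hσ.ne']

theorem integral_scaleDensity_sq (f : ℝ → ℝ) {σ : ℝ} (hσ : 0 < σ) :
    ∫ x, scaleDensity f σ x ^ 2 = σ⁻¹ * ∫ x, f x ^ 2 := by
  calc ∫ x, scaleDensity f σ x ^ 2
      = ∫ x, σ⁻¹ ^ 2 * (fun y => f y ^ 2) (x / σ) := by
        simp only [scaleDensity, mul_pow]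
    _ = σ⁻¹ * ∫ x, f x ^ 2 := by
        rw [integral_const_mul, Measure.integral_comp_div (fun y => f y ^ 2), abs_of_pos hσ,
          smul_eq_mul]
        field_simp

theorem integral_scaleDensity_inv_mul_self (f : ℝ → ℝ) {σ : ℝ} (hσ : 0 < σ) :
    ∫ x, scaleDensity f σ⁻¹ x * f x = σ * ∫ x, scaleDensity f σ x * f x := by
  simp_rw [integral_scaleDensity_mul f f hσ, scaleDensity_inv_apply, mul_assoc,
    integral_const_mul, mul_comm (f (σ * _))]

theorem Real.inv_mul_rpow_neg_half {σ c : ℝ} (hσ : 0 < σ) (hc : 0 ≤ c) :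
    (σ⁻¹ * c) ^ (-(1 : ℝ) / 2) = σ * (σ * c) ^ (-(1 : ℝ) / 2) := by
  rw [Real.mul_rpow (inv_nonneg.mpr hσ.le) hc, Real.mul_rpow hσ.le hc, Real.inv_rpow hσ.le,
    ← Real.rpow_neg hσ.le, ← mul_assoc, ← Real.rpow_one_add' hσ.le (by norm_num)]
  norm_num

theorem stmt4_general
    (f : ℝ → ℝ)
    (σ : ℝ) (hσ : 0 < σ) :
    (∫ x, (σ⁻¹ * f (x / σ)) * f x) * (∫ x, (σ⁻¹ * f (x / σ)) ^ 2) ^ (-(1 : ℝ) / 2)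
      = (∫ x, (σ * f (σ * x)) * f x) * (∫ x, (σ * f (σ * x)) ^ 2) ^ (-(1 : ℝ) / 2) := by
  have hsq : 0 ≤ ∫ x, f x ^ 2 := integral_nonneg fun x => sq_nonneg (f x)
  change (∫ x, scaleDensity f σ x * f x) * (∫ x, scaleDensity f σ x ^ 2) ^ (-(1 : ℝ) / 2) = _
  simp_rw [← scaleDensity_inv_apply]
  rw [integral_scaleDensity_inv_mul_self f hσ, integral_scaleDensity_sq f hσ,
    integral_scaleDensity_sq f (inv_pos.mpr hσ), inv_inv, Real.inv_mul_rpow_neg_half hσ hsq]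
  ring

/-- Spherical loss penalizes overestimating and underestimating the scale
symmetrically: with `f_σ(x) = σ⁻¹ f(x/σ)`, for all `σ > 0`,
`(∫ f_σ f)·(∫ f_σ²)^{-1/2} = (∫ f_{1/σ} f)·(∫ f_{1/σ}²)^{-1/2}`. -/
theorem stmt4
    (f : ℝ → ℝ) (hf0 : ∀ x, 0 ≤ f x) (hf1 : ∫ x, f x = 1)
    (hf2 : Integrable (fun x => (f x) ^ 2))
    (hpos : 0 < ∫ x, (f x) ^ 2)
    (σ : ℝ) (hσ : 0 < σ) :
    (∫ x, (σ⁻¹ * f (x / σ)) * f x) * (∫ x, (σ⁻¹ * f (x / σ)) ^ 2) ^ (-(1 : ℝ) / 2)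
      = (∫ x, (σ * f (σ * x)) * f x) * (∫ x, (σ * f (σ * x)) ^ 2) ^ (-(1 : ℝ) / 2) :=
  stmt4_general f σ hσ
end

section
/- Fix β ∈ (0,2) and d ≥ 1. Let μ be a probability measure on ℝ^d with ∫ ‖x‖₂^β dμ(x) < ∞, and for σ>0 let μ_σ be the pushforward of μ under x ↦ σx. Define the energy distance D(ν,μ) = ∫∫ ‖x−y‖₂^β dν(x)dμ(y) − ½ ∫∫ ‖x−x'‖₂^β dν(x)dν(x') − ½ ∫∫ ‖y−y'‖₂^β dμ(y)dμ(y'). Fix σ>1 and suppose D(μ_{1/σ}, μ) > 0. Then D(μ_σ, μ) = σ^β · D(μ_{1/σ}, μ) > D(μ_{1/σ}, μ). Equivalently, under energy loss with exponent β, the overdispersed forecast μ_σ incurs strictly larger expected loss against the target μ than the underdispersed forecast μ_{1/σ}. -/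
/-!
Write `D(ν, μ) = e(ν, μ) - ½ e(ν, ν) - ½ e(μ, μ)` with the cross term `e(ν, μ) = ∫∫ ‖x - y‖^β`.
Dilating both arguments of `e` by `t` multiplies it by `|t|^β`, and `e` is symmetric once the
integrand is integrable on the product, which finite `β`-moments guarantee. Since `μ` is the
dilation of `μ_{1/t}` by `t`, this gives `e(μ_t, μ) = |t|^β e(μ, μ_{1/t}) = |t|^β e(μ_{1/t}, μ)`,
while the self terms are `e(μ_t, μ_t) = |t|^β e(μ, μ)` and `e(μ_{1/t}, μ_{1/t}) = |t|^{-β} e(μ, μ)`.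
Substituting, `D(μ_t, μ) = |t|^β D(μ_{1/t}, μ)`, and `σ^β > 1` gives the strict inequality.
-/

open MeasureTheory Set

section EnergyDistance

variable {E : Type*} [NormedAddCommGroup E] [MeasurableSpace E] {β : ℝ} {ν μ : Measure E}

noncomputable def energyIntegral (β : ℝ) (ν μ : Measure E) : ℝ :=
  ∫ x, ∫ y, ‖x - y‖ ^ β ∂μ ∂ν

noncomputable def energyDistance (β : ℝ) (ν μ : Measure E) : ℝ :=
  energyIntegral β ν μ - 1 / 2 * energyIntegral β ν ν - 1 / 2 * energyIntegral β μ μ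

lemma energyIntegral_comm [SFinite ν] [SFinite μ]
    (h : Integrable (fun p : E × E => ‖p.1 - p.2‖ ^ β) (ν.prod μ)) :
    energyIntegral β ν μ = energyIntegral β μ ν := by
  simp only [energyIntegral]
  rw [integral_integral_swap h]
  simp only [norm_sub_rev]

lemma memLp_id_of_integrable_norm_rpow [BorelSpace E] [SecondCountableTopology E] (hβ : 0 < β)
    (hμ : Integrable (fun x => ‖x‖ ^ β) μ) : MemLp id (ENNReal.ofReal β) μ :=
  (integrable_norm_rpow_iff aestronglyMeasurable_id (by simpa using hβ) ENNReal.ofReal_ne_top).1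
    (by simpa [ENNReal.toReal_ofReal hβ.le] using hμ)

lemma integrable_norm_sub_rpow_prod [BorelSpace E] [SecondCountableTopology E]
    [IsProbabilityMeasure ν] [IsProbabilityMeasure μ] (hβ : 0 < β)
    (hν : Integrable (fun x => ‖x‖ ^ β) ν) (hμ : Integrable (fun x => ‖x‖ ^ β) μ) :
    Integrable (fun p : E × E => ‖p.1 - p.2‖ ^ β) (ν.prod μ) := by
  have hfst := (memLp_id_of_integrable_norm_rpow hβ hν).comp_measurePreserving
    (measurePreserving_fst (μ := ν) (ν := μ))
  have hsnd := (memLp_id_of_integrable_norm_rpow hβ hμ).comp_measurePreserving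
    (measurePreserving_snd (μ := ν) (ν := μ))
  simpa [ENNReal.toReal_ofReal hβ.le] using
    (hfst.sub hsnd).integrable_norm_rpow (by simpa using hβ) ENNReal.ofReal_ne_top

variable [NormedSpace ℝ E] [BorelSpace E]

lemma integrable_norm_rpow_map_smul (t : ℝ) (hμ : Integrable (fun x => ‖x‖ ^ β) μ) :
    Integrable (fun x => ‖x‖ ^ β) (μ.map (t • ·)) := by
  rw [integrable_map_measure (measurable_norm.pow_const β).aestronglyMeasurable
    (measurable_const_smul t).aemeasurable]
  have hscale : (fun x : E => ‖x‖ ^ β) ∘ (t • ·) = fun x => |t| ^ β * ‖x‖ ^ β := by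
    ext x
    simp [norm_smul, Real.mul_rpow (abs_nonneg t) (norm_nonneg x)]
  exact hscale ▸ hμ.const_mul _

lemma energyIntegral_map_smul {t : ℝ} (ht : t ≠ 0) :
    energyIntegral β (ν.map (t • ·)) (μ.map (t • ·)) = |t| ^ β * energyIntegral β ν μ := by
  have hemb : MeasurableEmbedding (t • · : E → E) := measurableEmbedding_const_smul₀ ht
  have hscale : ∀ x y : E, ‖t • x - t • y‖ ^ β = |t| ^ β * ‖x - y‖ ^ β := fun x y => by
    rw [← smul_sub, norm_smul, Real.norm_eq_abs, Real.mul_rpow (abs_nonneg t) (norm_nonneg _)]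
  simp only [energyIntegral, hemb.integral_map, hscale, integral_const_mul]

lemma energyIntegral_map_smul_left [SecondCountableTopology E] [IsProbabilityMeasure μ]
    (hβ : 0 < β) (hμ : Integrable (fun x => ‖x‖ ^ β) μ) {t : ℝ} (ht : t ≠ 0) :
    energyIntegral β (μ.map (t • ·)) μ = |t| ^ β * energyIntegral β (μ.map (t⁻¹ • ·)) μ := by
  have hμ_eq : (μ.map (t⁻¹ • ·)).map (t • ·) = μ := by
    rw [Measure.map_map (measurable_const_smul t) (measurable_const_smul t⁻¹)]
    simp [Function.comp_def, smul_inv_smul₀ ht]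
  have : IsProbabilityMeasure (μ.map (t⁻¹ • ·)) :=
    Measure.isProbabilityMeasure_map (measurable_const_smul t⁻¹).aemeasurable
  calc energyIntegral β (μ.map (t • ·)) μ
      = energyIntegral β (μ.map (t • ·)) ((μ.map (t⁻¹ • ·)).map (t • ·)) := by rw [hμ_eq]
    _ = |t| ^ β * energyIntegral β μ (μ.map (t⁻¹ • ·)) := energyIntegral_map_smul ht
    _ = |t| ^ β * energyIntegral β (μ.map (t⁻¹ • ·)) μ := by
      rw [energyIntegral_comm <| integrable_norm_sub_rpow_prod hβ hμ <|
        integrable_norm_rpow_map_smul t⁻¹ hμ]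

lemma energyDistance_map_smul [SecondCountableTopology E] [IsProbabilityMeasure μ]
    (hβ : 0 < β) (hμ : Integrable (fun x => ‖x‖ ^ β) μ) {t : ℝ} (ht : t ≠ 0) :
    energyDistance β (μ.map (t • ·)) μ = |t| ^ β * energyDistance β (μ.map (t⁻¹ • ·)) μ := by
  have htβ : |t| ^ β ≠ 0 := (Real.rpow_pos_of_pos (abs_pos.2 ht) β).ne'
  simp only [energyDistance, energyIntegral_map_smul_left hβ hμ ht, energyIntegral_map_smul ht,
    energyIntegral_map_smul (inv_ne_zero ht), abs_inv, Real.inv_rpow (abs_nonneg t)]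
  field_simp
  ring

end EnergyDistance

theorem stmt5_general
    (n : ℕ) (β : ℝ) (hβ : β ∈ Ioo (0 : ℝ) 2)
    (μ : Measure (EuclideanSpace ℝ (Fin n))) [IsProbabilityMeasure μ]
    (hmom : Integrable (fun x => ‖x‖ ^ β) μ)
    (D : Measure (EuclideanSpace ℝ (Fin n)) → Measure (EuclideanSpace ℝ (Fin n)) → ℝ)
    (hD : ∀ ν μ' : Measure (EuclideanSpace ℝ (Fin n)),
      D ν μ' = (∫ x, ∫ y, ‖x - y‖ ^ β ∂μ' ∂ν)
        - (1 / 2) * (∫ x, ∫ x', ‖x - x'‖ ^ β ∂ν ∂ν)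
        - (1 / 2) * (∫ y, ∫ y', ‖y - y'‖ ^ β ∂μ' ∂μ'))
    (σ : ℝ) (hσ : 1 < σ)
    (hposD : 0 < D (μ.map (fun x => σ⁻¹ • x)) μ) :
    D (μ.map (fun x => σ • x)) μ = σ ^ β * D (μ.map (fun x => σ⁻¹ • x)) μ ∧
    D (μ.map (fun x => σ⁻¹ • x)) μ < D (μ.map (fun x => σ • x)) μ := by
  have hD_eq : D = energyDistance β := funext₂ hD
  have hscaling : D (μ.map (fun x => σ • x)) μ = σ ^ β * D (μ.map (fun x => σ⁻¹ • x)) μ := by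
    rw [hD_eq, energyDistance_map_smul hβ.1 hmom (by positivity),
      abs_of_pos (zero_lt_one.trans hσ)]
  exact ⟨hscaling, hscaling ▸ lt_mul_of_one_lt_left hposD (Real.one_lt_rpow hσ hβ.1)⟩

/-- In a scale family on ℝ^d, energy loss with exponent `β ∈ (0,2)` penalizes
overdispersion strictly more than underdispersion:
`D(μ_σ, μ) = σ^β · D(μ_{1/σ}, μ) > D(μ_{1/σ}, μ)` for `σ > 1`, where `D` is the
(generalized) energy distance. -/
theorem stmt5
    (n : ℕ) (hn : 1 ≤ n) (β : ℝ) (hβ : β ∈ Ioo (0 : ℝ) 2)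
    (μ : Measure (EuclideanSpace ℝ (Fin n))) [IsProbabilityMeasure μ]
    (hmom : Integrable (fun x => ‖x‖ ^ β) μ)
    (D : Measure (EuclideanSpace ℝ (Fin n)) → Measure (EuclideanSpace ℝ (Fin n)) → ℝ)
    (hD : ∀ ν μ' : Measure (EuclideanSpace ℝ (Fin n)),
      D ν μ' = (∫ x, ∫ y, ‖x - y‖ ^ β ∂μ' ∂ν)
        - (1 / 2) * (∫ x, ∫ x', ‖x - x'‖ ^ β ∂ν ∂ν)
        - (1 / 2) * (∫ y, ∫ y', ‖y - y'‖ ^ β ∂μ' ∂μ'))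
    (σ : ℝ) (hσ : 1 < σ)
    (hposD : 0 < D (μ.map (fun x => σ⁻¹ • x)) μ) :
    D (μ.map (fun x => σ • x)) μ = σ ^ β * D (μ.map (fun x => σ⁻¹ • x)) μ ∧
    D (μ.map (fun x => σ⁻¹ • x)) μ < D (μ.map (fun x => σ • x)) μ :=
  stmt5_general n β hβ μ hmom D hD σ hσ hposD
end

section
/- Let G be a probability measure on ℝ with finite second moment and strictly positive variance; write m = ∫ x dG and v = Var(G) > 0. For σ>0, the scale family member G_σ (pushforward of G under x ↦ σx) has mean σm and variance σ²v, and the expected Dawid–Sebastiani loss of a forecast F against target G is ℓ(F,G) = log Var(F) + (Var(G) + (mean(G) − mean(F))²)/Var(F). Then for every σ>1, ℓ(G_σ, G) < ℓ(G_{1/σ}, G); explicitly, log(σ²v) + (v + (m − σm)²)/(σ²v) < log(v/σ²) + (v + (m − m/σ)²)·σ²/v. -/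
/-!
Scaling by `c` multiplies the mean by `c` and the variance by `c²`. After cancelling `log v`,
`ℓ(G_{1/σ}, G) - ℓ(G_σ, G) = (σ² - σ⁻² - 4 log σ) + (σ² - 1) (m - m/σ)² / v`, and the first
term is `2 (sinh x - x)` with `x = 2 log σ > 0`.
-/

open MeasureTheory ProbabilityTheory Real

lemma integral_id_map_const_mul (μ : Measure ℝ) (c : ℝ) :
    ∫ x, x ∂(μ.map (fun x => c * x)) = c * ∫ x, x ∂μ := by
  rw [integral_map (f := fun x => x) (measurable_const_mul c).aemeasurable
    aestronglyMeasurable_id, integral_const_mul]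

lemma variance_id_map_const_mul (μ : Measure ℝ) (c : ℝ) :
    variance id (μ.map (fun x => c * x)) = c ^ 2 * variance id μ := by
  rw [variance_map aemeasurable_id (measurable_const_mul c).aemeasurable]
  exact variance_const_mul c id μ

lemma two_mul_log_lt_sub_inv {t : ℝ} (ht : 1 < t) : 2 * log t < t - t⁻¹ := by
  have h := self_lt_sinh_iff.mpr (log_pos ht)
  rw [sinh_log (by linarith)] at h
  linarith

/-- `ℓ(F, G)` in terms of the means and variances of the forecast `F` and the target `G`. -/
noncomputable def dawidSebastianiLoss (mF vF mG vG : ℝ) : ℝ :=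
  log vF + (vG + (mG - mF) ^ 2) / vF

lemma dawidSebastianiLoss_scale_lt_inv_scale {m v σ : ℝ} (hv : 0 < v) (hσ : 1 < σ) :
    dawidSebastianiLoss (σ * m) (σ ^ 2 * v) m v
      < dawidSebastianiLoss (m / σ) (v / σ ^ 2) m v := by
  have hσ0 : 0 < σ := by linarith
  have hσ2 : 1 < σ ^ 2 := by nlinarith
  have ha : 0 ≤ (m - m / σ) ^ 2 / v := by positivity
  have hover : dawidSebastianiLoss (σ * m) (σ ^ 2 * v) m v
      = log v + log (σ ^ 2) + (σ ^ 2)⁻¹ + (m - m / σ) ^ 2 / v := by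
    rw [dawidSebastianiLoss, log_mul (by positivity) hv.ne']
    field_simp
    ring
  have hunder : dawidSebastianiLoss (m / σ) (v / σ ^ 2) m v
      = log v - log (σ ^ 2) + σ ^ 2 + σ ^ 2 * ((m - m / σ) ^ 2 / v) := by
    rw [dawidSebastianiLoss, log_div hv.ne' (by positivity)]
    field_simp
    ring
  rw [hover, hunder]
  linarith [two_mul_log_lt_sub_inv hσ2, le_mul_of_one_le_left ha hσ2.le]

theorem stmt6_general
    (G : Measure ℝ)
    (m v : ℝ) (hm : m = ∫ x, x ∂G) (hv : v = variance id G) (hvpos : 0 < v)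
    (σ : ℝ) (hσ : 1 < σ) :
    (∫ x, x ∂(G.map (fun x => σ * x)) = σ * m) ∧
    (variance id (G.map (fun x => σ * x)) = σ ^ 2 * v) ∧
    Real.log (σ ^ 2 * v) + (v + (m - σ * m) ^ 2) / (σ ^ 2 * v)
      < Real.log (v / σ ^ 2) + (v + (m - m / σ) ^ 2) * σ ^ 2 / v := by
  refine ⟨by rw [integral_id_map_const_mul, hm], by rw [variance_id_map_const_mul, hv], ?_⟩
  simpa only [dawidSebastianiLoss, div_div_eq_mul_div] using
    dawidSebastianiLoss_scale_lt_inv_scale (m := m) hvpos hσ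

/-- In a scale family, the Dawid–Sebastiani loss penalizes underdispersion
strictly more than overdispersion: the scale member `G_σ` has mean `σm` and
variance `σ²v`, and for `σ > 1` the expected DS loss of `G_σ` against `G` is
strictly smaller than that of `G_{1/σ}`. -/
theorem stmt6
    (G : Measure ℝ) [IsProbabilityMeasure G]
    (hmom : MemLp id 2 G)
    (m v : ℝ) (hm : m = ∫ x, x ∂G) (hv : v = variance id G) (hvpos : 0 < v)
    (σ : ℝ) (hσ : 1 < σ) :
    (∫ x, x ∂(G.map (fun x => σ * x)) = σ * m) ∧
    (variance id (G.map (fun x => σ * x)) = σ ^ 2 * v) ∧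
    Real.log (σ ^ 2 * v) + (v + (m - σ * m) ^ 2) / (σ ^ 2 * v)
      < Real.log (v / σ ^ 2) + (v + (m - m / σ) ^ 2) * σ ^ 2 / v :=
  stmt6_general G m v hm hv hvpos σ hσ
end

section
/- Let A : (0,∞) → ℝ be twice continuously differentiable and let d_A(y,x) = A(y) − A(x) − A'(x)(y−x) be its Bregman divergence. Fix η>0 and θ>1. Then: (1) if u ↦ u³·A''(u) is strictly increasing on (0,∞), then d_A(θη, η) > d_A(η/θ, η); (2) if u ↦ u³·A''(u) is strictly decreasing on (0,∞), then d_A(θη, η) < d_A(η/θ, η); (3) if u ↦ u³·A''(u) is constant on (0,∞), then d_A(θη, η) = d_A(η/θ, η). A key ingredient is the identity ∫_1^θ ∫_1^v u⁻³ du dv = (θ−1)²/(2θ) = ∫_{1/θ}^1 ∫_v^1 u⁻³ du dv. -/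
open Set intervalIntegral

/-!
Subtracting `c / (2u)` with `c = η³ A''(η)` does not change `d_A(θη, η) - d_A(η/θ, η)`:
the Bregman divergence of `1 / (2u)` is `(y - x)² / (2x²y)`, which takes the same value at
`y = θη` and at `y = η/θ`. The remainder `B` has `B''(u) = (u³ A''(u) - c) / u³`; when `u³ A''`
is strictly increasing this has the sign of `u - η`, so Taylor's formula with integral remainder
gives `d_B(η/θ, η) < 0 < d_B(θη, η)`. The decreasing case is the increasing one for `-A`, and in
the constant case `B'' = 0`. As `u⁻³` is the second derivative of `1 / (2u)`, the two double
integrals are the Bregman divergences of `1 / (2u)` at `(θ, 1)` and at `(θ⁻¹, 1)`.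
-/

noncomputable def bregman (A A' : ℝ → ℝ) (y x : ℝ) : ℝ :=
  A y - A x - A' x * (y - x)

theorem bregman_neg (A A' : ℝ → ℝ) (y x : ℝ) :
    bregman (fun u => -A u) (fun u => -A' u) y x = -bregman A A' y x := by
  simp only [bregman]; ring

theorem bregman_sub_const_mul (A A' B B' : ℝ → ℝ) (c y x : ℝ) :
    bregman (fun u => A u - c * B u) (fun u => A' u - c * B' u) y x
      = bregman A A' y x - c * bregman B B' y x := by
  simp only [bregman]; ring

section Taylor

variable {A A' A'' : ℝ → ℝ} {s : Set ℝ} [s.OrdConnected] {x y : ℝ}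

theorem bregman_eq_integral (hx : x ∈ s) (hy : y ∈ s) (hA : ∀ u ∈ s, HasDerivAt A (A' u) u)
    (hA' : ∀ u ∈ s, HasDerivAt A' (A'' u) u) (hA'' : ContinuousOn A'' s) :
    bregman A A' y x = ∫ u in x..y, (y - u) * A'' u := by
  have hxy : uIcc x y ⊆ s := Set.OrdConnected.uIcc_subset ‹_› hx hy
  have hderiv : ∀ u ∈ uIcc x y,
      HasDerivAt (fun t => A t + A' t * (y - t)) ((y - u) * A'' u) u := fun u hu =>
    ((hA u (hxy hu)).add ((hA' u (hxy hu)).mul ((hasDerivAt_id u).const_sub y))).congr_deriv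
      (by simp; ring)
  rw [integral_eq_sub_of_hasDerivAt hderiv
    ((continuousOn_const.sub continuousOn_id).mul (hA''.mono hxy)).intervalIntegrable, bregman]
  ring

theorem integral_integral_eq_bregman (hx : x ∈ s) (hy : y ∈ s)
    (hA : ∀ u ∈ s, HasDerivAt A (A' u) u) (hA' : ∀ u ∈ s, HasDerivAt A' (A'' u) u)
    (hA'' : ContinuousOn A'' s) :
    ∫ v in x..y, ∫ u in x..v, A'' u = bregman A A' y x := by
  have hxy : uIcc x y ⊆ s := Set.OrdConnected.uIcc_subset ‹_› hx hy
  have hinner : EqOn (fun v => ∫ u in x..v, A'' u) (fun v => A' v - A' x) (uIcc x y) := by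
    intro v hv
    have hxv : uIcc x v ⊆ s := Set.OrdConnected.uIcc_subset ‹_› hx (hxy hv)
    exact integral_eq_sub_of_hasDerivAt (fun u hu => hA' u (hxv hu))
      (hA''.mono hxv).intervalIntegrable
  have hderiv : ∀ v ∈ uIcc x y, HasDerivAt (fun t => A t - A' x * t) (A' v - A' x) v :=
    fun v hv => ((hA v (hxy hv)).sub ((hasDerivAt_id v).const_mul (A' x))).congr_deriv (by simp)
  have hcont : ContinuousOn (fun v => A' v - A' x) (uIcc x y) :=
    ContinuousOn.sub (fun v hv => (hA' v (hxy hv)).continuousAt.continuousWithinAt)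
      continuousOn_const
  rw [integral_congr hinner, integral_eq_sub_of_hasDerivAt hderiv hcont.intervalIntegrable,
    bregman]
  ring

theorem bregman_pos_of_deriv2_pos (hx : x ∈ s) (hy : y ∈ s) (hxy : x < y)
    (hA : ∀ u ∈ s, HasDerivAt A (A' u) u) (hA' : ∀ u ∈ s, HasDerivAt A' (A'' u) u)
    (hA'' : ContinuousOn A'' s) (hpos : ∀ u ∈ Ioo x y, 0 < A'' u) :
    0 < bregman A A' y x := by
  rw [bregman_eq_integral hx hy hA hA' hA'']
  exact intervalIntegral_pos_of_pos_on
    ((continuousOn_const.sub continuousOn_id).mul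
      (hA''.mono (Set.OrdConnected.uIcc_subset ‹_› hx hy))).intervalIntegrable
    (fun u hu => mul_pos (sub_pos.2 hu.2) (hpos u hu)) hxy

theorem bregman_neg_of_deriv2_neg (hx : x ∈ s) (hy : y ∈ s) (hyx : y < x)
    (hA : ∀ u ∈ s, HasDerivAt A (A' u) u) (hA' : ∀ u ∈ s, HasDerivAt A' (A'' u) u)
    (hA'' : ContinuousOn A'' s) (hneg : ∀ u ∈ Ioo y x, A'' u < 0) :
    bregman A A' y x < 0 := by
  rw [bregman_eq_integral hx hy hA hA' hA'', integral_symm, neg_neg_iff_pos]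
  exact intervalIntegral_pos_of_pos_on
    ((continuousOn_const.sub continuousOn_id).mul
      (hA''.mono (Set.OrdConnected.uIcc_subset ‹_› hy hx))).intervalIntegrable
    (fun u hu => mul_pos_of_neg_of_neg (sub_neg.2 hu.1) (hneg u hu)) hyx

end Taylor

noncomputable def halfInv (u : ℝ) : ℝ := (2 * u)⁻¹

noncomputable def halfInvDeriv (u : ℝ) : ℝ := -(2 * u ^ 2)⁻¹

theorem hasDerivAt_halfInv {u : ℝ} (hu : u ≠ 0) : HasDerivAt halfInv (halfInvDeriv u) u :=
  ((hasDerivAt_id u).const_mul 2).inv (by simpa using hu) |>.congr_deriv (by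
    simp only [halfInvDeriv, id]; field_simp)

theorem hasDerivAt_halfInvDeriv {u : ℝ} (hu : u ≠ 0) :
    HasDerivAt halfInvDeriv (u ^ 3)⁻¹ u :=
  (((hasDerivAt_pow 2 u).const_mul 2).inv (by simpa using hu)).neg |>.congr_deriv (by
    field_simp; ring)

theorem bregman_halfInv {x y : ℝ} (hx : x ≠ 0) (hy : y ≠ 0) :
    bregman halfInv halfInvDeriv y x = (y - x) ^ 2 / (2 * x ^ 2 * y) := by
  simp only [bregman, halfInv, halfInvDeriv]
  field_simp
  ring

theorem bregman_halfInv_mul_eq_div {η θ : ℝ} (hη : η ≠ 0) (hθ : θ ≠ 0) :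
    bregman halfInv halfInvDeriv (θ * η) η = bregman halfInv halfInvDeriv (η / θ) η := by
  rw [bregman_halfInv hη (mul_ne_zero hθ hη), bregman_halfInv hη (div_ne_zero hη hθ)]
  field_simp
  ring

theorem integral_integral_inv_pow_three {y : ℝ} (hy : 0 < y) :
    ∫ v in (1 : ℝ)..y, ∫ u in (1 : ℝ)..v, (u ^ 3)⁻¹ = (y - 1) ^ 2 / (2 * y) := by
  rw [integral_integral_eq_bregman (s := Ioi 0) (A'' := fun u => (u ^ 3)⁻¹)
    (mem_Ioi.2 one_pos) hy
    (fun u hu => hasDerivAt_halfInv (ne_of_gt hu))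
    (fun u hu => hasDerivAt_halfInvDeriv (ne_of_gt hu))
    ((continuousOn_pow 3).inv₀ fun _ hu => pow_ne_zero 3 (ne_of_gt hu)),
    bregman_halfInv one_ne_zero hy.ne']
  ring

section LogPartition

variable {A A' A'' : ℝ → ℝ} {η θ : ℝ}

theorem bregman_mul_sub_bregman_div_eq_of_sub_halfInv (c : ℝ) (hη : η ≠ 0) (hθ : θ ≠ 0) :
    bregman A A' (θ * η) η - bregman A A' (η / θ) η =
      bregman (fun u => A u - c * halfInv u) (fun u => A' u - c * halfInvDeriv u) (θ * η) η -
        bregman (fun u => A u - c * halfInv u) (fun u => A' u - c * halfInvDeriv u) (η / θ) η := by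
  rw [bregman_sub_const_mul, bregman_sub_const_mul, bregman_halfInv_mul_eq_div hη hθ]
  ring

theorem hasDerivAt_sub_const_mul_halfInv (hA : ∀ x ∈ Ioi (0 : ℝ), HasDerivAt A (A' x) x)
    (c : ℝ) : ∀ u ∈ Ioi (0 : ℝ),
    HasDerivAt (fun t => A t - c * halfInv t) (A' u - c * halfInvDeriv u) u :=
  fun u hu => (hA u hu).sub ((hasDerivAt_halfInv (ne_of_gt hu)).const_mul c)

theorem hasDerivAt_sub_const_mul_halfInvDeriv (hA' : ∀ x ∈ Ioi (0 : ℝ), HasDerivAt A' (A'' x) x)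
    (c : ℝ) : ∀ u ∈ Ioi (0 : ℝ),
    HasDerivAt (fun t => A' t - c * halfInvDeriv t) ((u ^ 3 * A'' u - c) / u ^ 3) u :=
  fun u hu => (hA' u hu).sub ((hasDerivAt_halfInvDeriv (ne_of_gt hu)).const_mul c) |>.congr_deriv
    (by field_simp [(mem_Ioi.1 hu).ne'])

theorem continuousOn_pow_three_mul_sub_div (hA'' : ContinuousOn A'' (Ioi 0)) (c : ℝ) :
    ContinuousOn (fun u => (u ^ 3 * A'' u - c) / u ^ 3) (Ioi 0) :=
  (((continuousOn_pow 3).mul hA'').sub continuousOn_const).div (continuousOn_pow 3)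
    fun _ hu => pow_ne_zero 3 (ne_of_gt hu)

theorem bregman_div_lt_bregman_mul_of_strictMonoOn
    (hA : ∀ x ∈ Ioi (0 : ℝ), HasDerivAt A (A' x) x)
    (hA' : ∀ x ∈ Ioi (0 : ℝ), HasDerivAt A' (A'' x) x) (hA'' : ContinuousOn A'' (Ioi 0))
    (hη : 0 < η) (hθ : 1 < θ) (hmono : StrictMonoOn (fun u => u ^ 3 * A'' u) (Ioi 0)) :
    bregman A A' (η / θ) η < bregman A A' (θ * η) η := by
  set c := η ^ 3 * A'' η
  have hθ0 : 0 < θ := one_pos.trans hθ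
  have hB := hasDerivAt_sub_const_mul_halfInv hA c
  have hB' := hasDerivAt_sub_const_mul_halfInvDeriv hA' c
  have hB'' := continuousOn_pow_three_mul_sub_div hA'' c
  have hright := bregman_pos_of_deriv2_pos (s := Ioi 0) hη (mem_Ioi.2 (by positivity))
    (lt_mul_of_one_lt_left hη hθ)
    hB hB' hB'' fun u hu =>
      div_pos (sub_pos.2 (hmono hη (hη.trans hu.1) hu.1)) (pow_pos (hη.trans hu.1) 3)
  have hleft := bregman_neg_of_deriv2_neg (s := Ioi 0) hη (mem_Ioi.2 (by positivity))
    (div_lt_self hη hθ) hB hB' hB'' fun u hu =>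
      div_neg_of_neg_of_pos (sub_neg.2 (hmono (lt_trans (by positivity) hu.1) hη hu.2))
        (pow_pos (lt_trans (by positivity) hu.1) 3)
  linarith [bregman_mul_sub_bregman_div_eq_of_sub_halfInv (A := A) (A' := A') c hη.ne' hθ0.ne']

theorem bregman_mul_lt_bregman_div_of_strictAntiOn
    (hA : ∀ x ∈ Ioi (0 : ℝ), HasDerivAt A (A' x) x)
    (hA' : ∀ x ∈ Ioi (0 : ℝ), HasDerivAt A' (A'' x) x) (hA'' : ContinuousOn A'' (Ioi 0))
    (hη : 0 < η) (hθ : 1 < θ) (hanti : StrictAntiOn (fun u => u ^ 3 * A'' u) (Ioi 0)) :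
    bregman A A' (θ * η) η < bregman A A' (η / θ) η := by
  have h := bregman_div_lt_bregman_mul_of_strictMonoOn (A := fun u => -A u)
    (A' := fun u => -A' u) (A'' := fun u => -A'' u)
    (fun x hx => (hA x hx).neg) (fun x hx => (hA' x hx).neg) hA''.neg hη hθ
    fun u hu v hv huv => by simpa only [mul_neg, neg_lt_neg_iff] using hanti hu hv huv
  rwa [bregman_neg, bregman_neg, neg_lt_neg_iff] at h

theorem bregman_mul_eq_bregman_div_of_forall_eq
    (hA : ∀ x ∈ Ioi (0 : ℝ), HasDerivAt A (A' x) x)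
    (hA' : ∀ x ∈ Ioi (0 : ℝ), HasDerivAt A' (A'' x) x) (hA'' : ContinuousOn A'' (Ioi 0))
    (hη : 0 < η) (hθ : 0 < θ)
    (hconst : ∀ u ∈ Ioi (0 : ℝ), ∀ v ∈ Ioi (0 : ℝ), u ^ 3 * A'' u = v ^ 3 * A'' v) :
    bregman A A' (θ * η) η = bregman A A' (η / θ) η := by
  set c := η ^ 3 * A'' η
  have hB_zero : ∀ y ∈ Ioi (0 : ℝ),
      bregman (fun u => A u - c * halfInv u) (fun u => A' u - c * halfInvDeriv u) y η = 0 := by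
    intro y hy
    rw [bregman_eq_integral (s := Ioi 0) hη hy (hasDerivAt_sub_const_mul_halfInv hA c)
      (hasDerivAt_sub_const_mul_halfInvDeriv hA' c) (continuousOn_pow_three_mul_sub_div hA'' c)]
    refine (integral_congr fun u hu => ?_).trans integral_zero
    simp [hconst u (Set.OrdConnected.uIcc_subset ordConnected_Ioi hη hy hu) η hη, c]
  linarith [bregman_mul_sub_bregman_div_eq_of_sub_halfInv (A := A) (A' := A') c hη.ne' hθ.ne',
    hB_zero (θ * η) (mem_Ioi.2 (by positivity)), hB_zero (η / θ) (mem_Ioi.2 (by positivity))]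

end LogPartition

/-- Asymmetry of the Bregman divergence of a log-partition function on `(0,∞)`
(Lemma "acceleration" of the paper, case `Ω = (0,∞)`): the sign of
`d_A(θη, η) − d_A(η/θ, η)` is governed by the monotonicity of `u ↦ u³ A''(u)`.
A key ingredient is `∫_1^θ ∫_1^v u⁻³ du dv = (θ−1)²/(2θ) = ∫_{1/θ}^1 ∫_v^1 u⁻³ du dv`. -/
theorem stmt8
    (A A' A'' : ℝ → ℝ)
    (hA' : ∀ x ∈ Ioi (0 : ℝ), HasDerivAt A (A' x) x)
    (hA'' : ∀ x ∈ Ioi (0 : ℝ), HasDerivAt A' (A'' x) x)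
    (hcont : ContinuousOn A'' (Ioi 0))
    (dA : ℝ → ℝ → ℝ) (hdA : ∀ y x, dA y x = A y - A x - A' x * (y - x))
    (η θ : ℝ) (hη : 0 < η) (hθ : 1 < θ) :
    (StrictMonoOn (fun u => u ^ 3 * A'' u) (Ioi 0) → dA (η / θ) η < dA (θ * η) η) ∧
    (StrictAntiOn (fun u => u ^ 3 * A'' u) (Ioi 0) → dA (θ * η) η < dA (η / θ) η) ∧
    ((∀ u ∈ Ioi (0 : ℝ), ∀ v ∈ Ioi (0 : ℝ), u ^ 3 * A'' u = v ^ 3 * A'' v) →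
      dA (θ * η) η = dA (η / θ) η) ∧
    (∫ v in (1 : ℝ)..θ, ∫ u in (1 : ℝ)..v, (u ^ 3)⁻¹) = (θ - 1) ^ 2 / (2 * θ) ∧
    (∫ v in θ⁻¹..(1 : ℝ), ∫ u in v..(1 : ℝ), (u ^ 3)⁻¹) = (θ - 1) ^ 2 / (2 * θ) := by
  obtain rfl : dA = bregman A A' := funext₂ hdA
  have hθ0 : 0 < θ := one_pos.trans hθ
  refine ⟨bregman_div_lt_bregman_mul_of_strictMonoOn hA' hA'' hcont hη hθ,
    bregman_mul_lt_bregman_div_of_strictAntiOn hA' hA'' hcont hη hθ,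
    bregman_mul_eq_bregman_div_of_forall_eq hA' hA'' hcont hη hθ0,
    integral_integral_inv_pow_three hθ0, ?_⟩
  have hswap : (fun v => ∫ u in v..(1 : ℝ), (u ^ 3)⁻¹) =
      fun v => -∫ u in (1 : ℝ)..v, (u ^ 3)⁻¹ := funext fun v => integral_symm _ _
  rw [hswap, integral_neg, ← integral_symm, integral_integral_inv_pow_three (inv_pos.2 hθ0)]
  field_simp
  ring
end

section
/- Let A : ℝ → ℝ be twice continuously differentiable, let d_A(y,x) = A(y) − A(x) − A'(x)(y−x) be its Bregman divergence, and fix η∈ℝ. Then, for all θ>0: (1) if A''(η+u) > A''(η−u) for all u>0, then d_A(η+θ, η) > d_A(η−θ, η); (2) if A''(η+u) < A''(η−u) for all u>0, then d_A(η+θ, η) < d_A(η−θ, η); (3) if A''(η+u) = A''(η−u) for all u>0, then d_A(η+θ, η) = d_A(η−θ, η). In particular, for A(u) = e^u (the log-partition function of the Poisson family in its natural parameter), d_A(η+θ, η) > d_A(η−θ, η) for every η∈ℝ and θ>0. -/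
/-!
Put `F(θ) = A(η+θ) − A(η−θ) − 2A'(η)θ`, so that `d_A(η+θ, η) − d_A(η−θ, η) = F(θ)`.
Then `F(0) = F'(0) = 0` and `F''(θ) = A''(η+θ) − A''(η−θ)`, so the sign of `F''` on `(0, ∞)`
passes to `F'` and then to `F` by monotonicity, twice. Replacing `A` by `−A` flips every sign.
-/

section Monotonicity

variable {f f' f'' : ℝ → ℝ}

lemma pos_of_hasDerivAt_of_pos (hf : ∀ x, HasDerivAt f (f' x) x) (h0 : f 0 = 0)
    (hpos : ∀ x > 0, 0 < f' x) {x : ℝ} (hx : 0 < x) : 0 < f x := by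
  have hmono : StrictMonoOn f (Set.Ici 0) :=
    strictMonoOn_of_deriv_pos (convex_Ici 0)
      (fun t _ => (hf t).continuousAt.continuousWithinAt)
      (fun t ht => by
        rw [interior_Ici] at ht
        exact (hf t).deriv ▸ hpos t ht)
  simpa [h0] using hmono Set.self_mem_Ici hx.le hx

lemma nonneg_of_hasDerivAt_of_nonneg (hf : ∀ x, HasDerivAt f (f' x) x) (h0 : f 0 = 0)
    (hnonneg : ∀ x > 0, 0 ≤ f' x) {x : ℝ} (hx : 0 ≤ x) : 0 ≤ f x := by
  have hmono : MonotoneOn f (Set.Ici 0) :=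
    monotoneOn_of_deriv_nonneg (convex_Ici 0)
      (fun t _ => (hf t).continuousAt.continuousWithinAt)
      (fun t _ => (hf t).differentiableAt.differentiableWithinAt)
      (fun t ht => by
        rw [interior_Ici] at ht
        exact (hf t).deriv ▸ hnonneg t ht)
  simpa [h0] using hmono Set.self_mem_Ici hx hx

lemma pos_of_hasDerivAt_two (hf : ∀ x, HasDerivAt f (f' x) x) (hf' : ∀ x, HasDerivAt f' (f'' x) x)
    (h0 : f 0 = 0) (h0' : f' 0 = 0) (hpos : ∀ x > 0, 0 < f'' x) {x : ℝ} (hx : 0 < x) :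
    0 < f x :=
  pos_of_hasDerivAt_of_pos hf h0 (fun _ ht => pos_of_hasDerivAt_of_pos hf' h0' hpos ht) hx

lemma nonneg_of_hasDerivAt_two (hf : ∀ x, HasDerivAt f (f' x) x)
    (hf' : ∀ x, HasDerivAt f' (f'' x) x) (h0 : f 0 = 0) (h0' : f' 0 = 0)
    (hnonneg : ∀ x > 0, 0 ≤ f'' x) {x : ℝ} (hx : 0 ≤ x) : 0 ≤ f x :=
  nonneg_of_hasDerivAt_of_nonneg hf h0
    (fun _ ht => nonneg_of_hasDerivAt_of_nonneg hf' h0' hnonneg ht.le) hx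

end Monotonicity

section CentralDifference

variable {g g' : ℝ → ℝ} (η : ℝ)

lemma hasDerivAt_comp_add_sub_comp_sub (hg : ∀ x, HasDerivAt g (g' x) x) (t : ℝ) :
    HasDerivAt (fun t => g (η + t) - g (η - t)) (g' (η + t) + g' (η - t)) t := by
  have hplus := (hg (η + t)).comp t ((hasDerivAt_id t).const_add η)
  have hminus := (hg (η - t)).comp t ((hasDerivAt_id t).const_sub η)
  simpa [Function.comp_def] using hplus.fun_sub hminus

lemma hasDerivAt_comp_add_add_comp_sub (hg : ∀ x, HasDerivAt g (g' x) x) (t : ℝ) :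
    HasDerivAt (fun t => g (η + t) + g (η - t)) (g' (η + t) - g' (η - t)) t := by
  have hplus := (hg (η + t)).comp t ((hasDerivAt_id t).const_add η)
  have hminus := (hg (η - t)).comp t ((hasDerivAt_id t).const_sub η)
  simpa [Function.comp_def, sub_eq_add_neg] using hplus.fun_add hminus

end CentralDifference

section Asymmetry

variable {A A' A'' : ℝ → ℝ} {η : ℝ}

lemma hasDerivAt_centralDiff (hA' : ∀ x, HasDerivAt A (A' x) x) (t : ℝ) :
    HasDerivAt (fun t => A (η + t) - A (η - t) - 2 * A' η * t)
      (A' (η + t) + A' (η - t) - 2 * A' η) t := by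
  simpa using
    (hasDerivAt_comp_add_sub_comp_sub η hA' t).fun_sub ((hasDerivAt_id t).const_mul (2 * A' η))

lemma hasDerivAt_centralSum (hA'' : ∀ x, HasDerivAt A' (A'' x) x) (t : ℝ) :
    HasDerivAt (fun t => A' (η + t) + A' (η - t) - 2 * A' η) (A'' (η + t) - A'' (η - t)) t :=
  (hasDerivAt_comp_add_add_comp_sub η hA'' t).sub_const _

lemma centralDiff_pos (hA' : ∀ x, HasDerivAt A (A' x) x) (hA'' : ∀ x, HasDerivAt A' (A'' x) x)
    (h : ∀ u > 0, A'' (η - u) < A'' (η + u)) {θ : ℝ} (hθ : 0 < θ) :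
    0 < A (η + θ) - A (η - θ) - 2 * A' η * θ :=
  pos_of_hasDerivAt_two (hasDerivAt_centralDiff hA') (hasDerivAt_centralSum hA'')
    (by simp) (by simp only [add_zero, sub_zero]; ring) (fun u hu => sub_pos.2 (h u hu)) hθ

lemma centralDiff_nonneg (hA' : ∀ x, HasDerivAt A (A' x) x) (hA'' : ∀ x, HasDerivAt A' (A'' x) x)
    (h : ∀ u > 0, A'' (η - u) ≤ A'' (η + u)) {θ : ℝ} (hθ : 0 ≤ θ) :
    0 ≤ A (η + θ) - A (η - θ) - 2 * A' η * θ :=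
  nonneg_of_hasDerivAt_two (hasDerivAt_centralDiff hA') (hasDerivAt_centralSum hA'')
    (by simp) (by simp only [add_zero, sub_zero]; ring) (fun u hu => sub_nonneg.2 (h u hu)) hθ

end Asymmetry

theorem stmt9_general
    (A A' A'' : ℝ → ℝ)
    (hA' : ∀ x, HasDerivAt A (A' x) x)
    (hA'' : ∀ x, HasDerivAt A' (A'' x) x)
    (dA : ℝ → ℝ → ℝ) (hdA : ∀ y x, dA y x = A y - A x - A' x * (y - x))
    (η : ℝ) :
    (∀ θ > (0 : ℝ),
      ((∀ u > (0 : ℝ), A'' (η - u) < A'' (η + u)) → dA (η - θ) η < dA (η + θ) η) ∧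
      ((∀ u > (0 : ℝ), A'' (η + u) < A'' (η - u)) → dA (η + θ) η < dA (η - θ) η) ∧
      ((∀ u > (0 : ℝ), A'' (η + u) = A'' (η - u)) → dA (η + θ) η = dA (η - θ) η)) ∧
    (∀ θ > (0 : ℝ),
      Real.exp (η - θ) - Real.exp η - Real.exp η * ((η - θ) - η)
        < Real.exp (η + θ) - Real.exp η - Real.exp η * ((η + θ) - η)) := by
  have hnegA' : ∀ x, HasDerivAt (-A) (-A' x) x := fun x => (hA' x).neg
  have hnegA'' : ∀ x, HasDerivAt (-A') (-A'' x) x := fun x => (hA'' x).neg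
  have hdiff : ∀ θ, dA (η + θ) η - dA (η - θ) η = A (η + θ) - A (η - θ) - 2 * A' η * θ := by
    intro θ
    rw [hdA, hdA]
    ring
  refine ⟨fun θ hθ => ⟨fun h => ?_, fun h => ?_, fun h => ?_⟩, fun θ hθ => ?_⟩
  · linarith [hdiff θ, centralDiff_pos hA' hA'' h hθ]
  · have := centralDiff_pos hnegA' hnegA'' (fun u hu => neg_lt_neg (h u hu)) hθ
    simp only [Pi.neg_apply] at this
    linarith [hdiff θ]
  · have hle := centralDiff_nonneg hA' hA'' (fun u hu => (h u hu).ge) hθ.le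
    have hge := centralDiff_nonneg hnegA' hnegA'' (fun u hu => (congrArg Neg.neg (h u hu)).ge) hθ.le
    simp only [Pi.neg_apply] at hge
    linarith [hdiff θ]
  · have := centralDiff_pos (η := η) Real.hasDerivAt_exp Real.hasDerivAt_exp
      (fun u hu => Real.exp_lt_exp.2 (by linarith)) hθ
    linarith

/-- Asymmetry of the Bregman divergence of a log-partition function on ℝ
(Lemma "acceleration" of the paper, case `Ω = ℝ`): the sign of
`d_A(η+θ, η) − d_A(η−θ, η)` is governed by the comparison of `A''(η+u)` with
`A''(η−u)`. In particular, for `A = exp` (the Poisson family), the Bregman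
divergence satisfies `d_A(η+θ, η) > d_A(η−θ, η)`. -/
theorem stmt9
    (A A' A'' : ℝ → ℝ)
    (hA' : ∀ x, HasDerivAt A (A' x) x)
    (hA'' : ∀ x, HasDerivAt A' (A'' x) x)
    (hcont : Continuous A'')
    (dA : ℝ → ℝ → ℝ) (hdA : ∀ y x, dA y x = A y - A x - A' x * (y - x))
    (η : ℝ) :
    (∀ θ > (0 : ℝ),
      ((∀ u > (0 : ℝ), A'' (η - u) < A'' (η + u)) → dA (η - θ) η < dA (η + θ) η) ∧
      ((∀ u > (0 : ℝ), A'' (η + u) < A'' (η - u)) → dA (η + θ) η < dA (η - θ) η) ∧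
      ((∀ u > (0 : ℝ), A'' (η + u) = A'' (η - u)) → dA (η + θ) η = dA (η - θ) η)) ∧
    (∀ θ > (0 : ℝ),
      Real.exp (η - θ) - Real.exp η - Real.exp η * ((η - θ) - η)
        < Real.exp (η + θ) - Real.exp η - Real.exp η * ((η + θ) - η)) :=
  stmt9_general A A' A'' hA' hA'' dA hdA η
end

section
/- The function f : (0,∞) → ℝ defined by f(x) = x³ · ∑_{n=0}^∞ 1/(x+n)² is strictly increasing on (0,∞). (The series equals the trigamma function ψ'(x), so x³·ψ'(x) is strictly increasing; its derivative satisfies f'(x) = x² · ∑_{n=0}^∞ (x+3n)/(x+n)³ > 0.) -/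
open Set

/-!
Distribute `x³` over the series: each summand `x³/(x+n)² = x · (x/(x+n))²` is strictly increasing
on `(0,∞)`, being the product of `x` with the square of the positive nondecreasing function
`x/(x+n)`, and a convergent series of increasing functions, one of them strictly increasing, is
strictly increasing.
-/

theorem StrictMonoOn.tsum {ι α : Type*} [Preorder α] {f : ι → α → ℝ} {s : Set α}
    (hf : ∀ i, MonotoneOn (f i) s) {i₀ : ι} (hi₀ : StrictMonoOn (f i₀) s)
    (hsum : ∀ x ∈ s, Summable (f · x)) :
    StrictMonoOn (fun x => ∑' i, f i x) s :=
  fun _ ha _ hb hab =>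
    Summable.tsum_lt_tsum (fun i => hf i ha hb hab.le) (hi₀ ha hb hab) (hsum _ ha) (hsum _ hb)

theorem summable_one_div_add_natCast_sq (x : ℝ) :
    Summable fun n : ℕ => 1 / (x + n) ^ 2 := by
  simpa [add_comm, Real.rpow_two, sq_abs] using
    (Real.summable_one_div_nat_add_rpow x 2).2 one_lt_two

theorem strictMonoOn_pow_three_div_add_sq {c : ℝ} (hc : 0 ≤ c) :
    StrictMonoOn (fun x : ℝ => x ^ 3 / (x + c) ^ 2) (Ioi 0) := by
  intro a (ha : 0 < a) b (hb : 0 < b) hab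
  have hratio : a * (b + c) ≤ b * (a + c) := by nlinarith
  rw [div_lt_div_iff₀ (by positivity) (by positivity)]
  calc a ^ 3 * (b + c) ^ 2 = a * (a * (b + c)) ^ 2 := by ring
    _ ≤ a * (b * (a + c)) ^ 2 := by gcongr
    _ < b * (b * (a + c)) ^ 2 := by gcongr
    _ = b ^ 3 * (a + c) ^ 2 := by ring

/-- The function `x ↦ x³ · ∑_{n=0}^∞ 1/(x+n)²` (i.e. `x³ ψ'(x)` where `ψ'` is
the trigamma function) is strictly increasing on `(0,∞)`. -/
theorem stmt15 :
    StrictMonoOn (fun x : ℝ => x ^ 3 * ∑' n : ℕ, 1 / (x + n) ^ 2) (Ioi 0) := by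
  have hterm (n : ℕ) := strictMonoOn_pow_three_div_add_sq (Nat.cast_nonneg (α := ℝ) n)
  have hdistrib : (fun x : ℝ => x ^ 3 * ∑' n : ℕ, 1 / (x + n) ^ 2) =
      fun x : ℝ => ∑' n : ℕ, x ^ 3 / (x + n) ^ 2 := by
    funext x
    simp only [← tsum_mul_left, mul_one_div]
  rw [hdistrib]
  exact StrictMonoOn.tsum (fun n => (hterm n).monotoneOn) (hterm 0)
    fun x _ => by
      simpa only [mul_one_div] using (summable_one_div_add_natCast_sq x).mul_left (x ^ 3)
end

section
/- Let w : ℝ → [0,∞) be continuous. Suppose that for every probability measure on ℝ with cumulative distribution function G, the threshold-weighted Cramér divergence is symmetric in scale and in location around G: ∫_ℝ w(y)(G(y/σ) − G(y))² dy = ∫_ℝ w(y)(G(σy) − G(y))² dy for all σ > 0, and ∫_ℝ w(y)(G(y−μ) − G(y))² dy = ∫_ℝ w(y)(G(y+μ) − G(y))² dy for all μ ∈ ℝ. Then w(y) = 0 for all y ∈ ℝ. In other words, no nonzero threshold weight function makes threshold-weighted CRP loss penalize symmetrically in all location families and all scale families simultaneously. -/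
/-!
Testing the hypotheses on point masses turns the weighted Cramér divergence into an integral of
`w` over an interval. Location symmetry at `δ_c` gives `∫_c^{c+μ} w = ∫_{c-μ}^c w` for all `c, μ`;
differentiating in `μ` shows that `w` is symmetric about every point, hence constant. Scale
symmetry at `δ_1` with `σ = 2` gives `∫_1^2 w = ∫_{1/2}^1 w`, which forces the constant to vanish.
-/

open MeasureTheory Set

lemma dirac_Iic_eq_of_iff {c x d y : ℝ} (h : c ≤ x ↔ d ≤ y) :
    Measure.dirac c (Iic x) = Measure.dirac d (Iic y) := by
  simp only [Measure.dirac_apply' _ measurableSet_Iic, indicator_apply, mem_Iic, Pi.one_apply, h]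

lemma integral_mul_sq_dirac_cdf_sub (w : ℝ → ℝ) {a b : ℝ} (hab : a ≤ b) :
    ∫ y, w y * ((Measure.dirac a (Iic y)).toReal - (Measure.dirac b (Iic y)).toReal) ^ 2
      = ∫ y in a..b, w y := by
  have hind : (fun y => w y * ((Measure.dirac a (Iic y)).toReal
      - (Measure.dirac b (Iic y)).toReal) ^ 2) = (Ico a b).indicator w := by
    funext y
    simp only [Measure.dirac_apply' _ measurableSet_Iic, indicator_apply, mem_Iic, mem_Ico,
      Pi.one_apply]
    by_cases hay : a ≤ y <;> by_cases hby : b ≤ y <;> simp [hay, hby]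
    exact absurd (hab.trans hby) hay
  rw [hind, integral_indicator measurableSet_Ico, integral_Ico_eq_integral_Ioo,
    intervalIntegral.integral_of_le hab, integral_Ioc_eq_integral_Ioo]

lemma integral_mul_sq_dirac_cdf_sub_rev (w : ℝ → ℝ) {a b : ℝ} (hab : a ≤ b) :
    ∫ y, w y * ((Measure.dirac b (Iic y)).toReal - (Measure.dirac a (Iic y)).toReal) ^ 2
      = ∫ y in a..b, w y := by
  simp_rw [sub_sq_comm (Measure.dirac b _).toReal]
  exact integral_mul_sq_dirac_cdf_sub w hab

lemma intervalIntegral_add_eq_sub_of_nonneg {w : ℝ → ℝ}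
    (h : ∀ c μ : ℝ, 0 ≤ μ → ∫ t in c..c + μ, w t = ∫ t in c - μ..c, w t) (c μ : ℝ) :
    ∫ t in c..c + μ, w t = ∫ t in c - μ..c, w t := by
  rcases le_total 0 μ with hμ | hμ
  · exact h c μ hμ
  · have := h c (-μ) (neg_nonneg.mpr hμ)
    rw [sub_neg_eq_add, ← sub_eq_add_neg] at this
    rw [intervalIntegral.integral_symm, ← this, intervalIntegral.integral_symm, neg_neg]

lemma Continuous.eq_of_forall_intervalIntegral_eq {f g : ℝ → ℝ} (hf : Continuous f)
    (hg : Continuous g) (h : ∀ x, ∫ t in (0 : ℝ)..x, f t = ∫ t in (0 : ℝ)..x, g t) : f = g := by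
  funext x
  rw [← Continuous.deriv_integral f hf 0 x, ← Continuous.deriv_integral g hg 0 x, funext h]

lemma Continuous.symm_of_intervalIntegral_add_eq_sub {w : ℝ → ℝ} (hw : Continuous w)
    (h : ∀ c μ : ℝ, ∫ t in c..c + μ, w t = ∫ t in c - μ..c, w t) (c x : ℝ) :
    w (c + x) = w (c - x) := by
  have key := (hw.comp (continuous_const_add c)).eq_of_forall_intervalIntegral_eq
    (hw.comp (continuous_sub_left c)) fun μ => by
      simp only [Function.comp_def, intervalIntegral.integral_comp_add_left,
        intervalIntegral.integral_comp_sub_left, add_zero, sub_zero]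
      exact h c μ
  exact congrFun key x

lemma eq_of_forall_symm {w : ℝ → ℝ} (h : ∀ c x : ℝ, w (c + x) = w (c - x)) (x : ℝ) :
    w x = w 0 := by
  simpa using h (x / 2) (x / 2)

theorem stmt16_general
    (w : ℝ → ℝ) (hwc : Continuous w)
    (hscale : ∀ P : Measure ℝ, IsProbabilityMeasure P → ∀ σ > (0 : ℝ),
      (∫ y, w y * ((P (Iic (y / σ))).toReal - (P (Iic y)).toReal) ^ 2)
        = ∫ y, w y * ((P (Iic (σ * y))).toReal - (P (Iic y)).toReal) ^ 2)
    (hloc : ∀ P : Measure ℝ, IsProbabilityMeasure P → ∀ μ : ℝ,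
      (∫ y, w y * ((P (Iic (y - μ))).toReal - (P (Iic y)).toReal) ^ 2)
        = ∫ y, w y * ((P (Iic (y + μ))).toReal - (P (Iic y)).toReal) ^ 2) :
    ∀ y, w y = 0 := by
  have hshift : ∀ c μ : ℝ, 0 ≤ μ → ∫ t in c..c + μ, w t = ∫ t in c - μ..c, w t := by
    intro c μ hμ
    have h := hloc (Measure.dirac c) inferInstance μ
    simp_rw [fun y => dirac_Iic_eq_of_iff (c := c) (x := y - μ) (d := c + μ) (y := y)
        le_sub_iff_add_le,
      fun y => dirac_Iic_eq_of_iff (c := c) (x := y + μ) (d := c - μ) (y := y)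
        sub_le_iff_le_add.symm] at h
    rwa [integral_mul_sq_dirac_cdf_sub_rev w (by linarith),
      integral_mul_sq_dirac_cdf_sub w (by linarith)] at h
  have hconst := eq_of_forall_symm
    (hwc.symm_of_intervalIntegral_add_eq_sub (intervalIntegral_add_eq_sub_of_nonneg hshift))
  have h := hscale (Measure.dirac 1) inferInstance 2 two_pos
  simp_rw [fun y => dirac_Iic_eq_of_iff (c := 1) (x := y / 2) (d := 2) (y := y)
      (by rw [le_div_iff₀ two_pos, one_mul]),
    fun y => dirac_Iic_eq_of_iff (c := 1) (x := 2 * y) (d := 1 / 2) (y := y)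
      (by constructor <;> intro <;> linarith)] at h
  rw [integral_mul_sq_dirac_cdf_sub_rev w one_le_two,
    integral_mul_sq_dirac_cdf_sub w (by norm_num : (1 : ℝ) / 2 ≤ 1)] at h
  simp only [hconst, intervalIntegral.integral_const, smul_eq_mul] at h
  intro y
  rw [hconst y]
  linarith

/-- No nonzero threshold weight function makes threshold-weighted CRP loss
penalize symmetrically in all scale families and all location families
simultaneously: if the weighted Cramér divergence is symmetric in scale and in
location around every probability distribution, then `w ≡ 0`. -/
theorem stmt16
    (w : ℝ → ℝ) (hwc : Continuous w) (hw0 : ∀ y, 0 ≤ w y)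
    (hscale : ∀ P : Measure ℝ, IsProbabilityMeasure P → ∀ σ > (0 : ℝ),
      (∫ y, w y * ((P (Iic (y / σ))).toReal - (P (Iic y)).toReal) ^ 2)
        = ∫ y, w y * ((P (Iic (σ * y))).toReal - (P (Iic y)).toReal) ^ 2)
    (hloc : ∀ P : Measure ℝ, IsProbabilityMeasure P → ∀ μ : ℝ,
      (∫ y, w y * ((P (Iic (y - μ))).toReal - (P (Iic y)).toReal) ^ 2)
        = ∫ y, w y * ((P (Iic (y + μ))).toReal - (P (Iic y)).toReal) ^ 2) :
    ∀ y, w y = 0 :=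
  stmt16_general w hwc hscale hloc
end
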